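/- arXiv:2305.06260 — 8 statements merged into one kernel-verified Lean document; each statement's English description precedes it below -/
import Mathlib

section
/- If f is a multiplicative arithmetic function and c is a positive integer with f(c) ≠ 0, then the function n ↦ f(c·n)/f(c) is multiplicative. -/
/-!
Write `c = u * v`, where `u` collects the prime powers of `c` at primes dividing `m` and `v` the
rest. For coprime `m`, `n` the four numbers `u * m`, `v * n`, `u`, `v` then split each of
`c * m * n`, `c`, `c * m`, `c * n` into a coprime product, and both sides of
`f (c * m * n) * f c = f (c * m) * f (c * n)` become `f (u * m) * f (v * n) * f u * f v`.
-/

theorem Nat.Coprime.exists_mul_eq_and_coprime_mul_mul {m n : ℕ} (hmn : m.Coprime n) {c : ℕ}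
    (hc : c ≠ 0) : ∃ u v, u * v = c ∧ (u * m).Coprime (v * n) := by
  induction c using Nat.recOnPrimePow with
  | zero => exact absurd rfl hc
  | one => exact ⟨1, 1, rfl, by simpa using hmn⟩
  | prime_pow_mul a p k hp hpa _ ih =>
    obtain ⟨u, v, rfl, huv⟩ := ih (right_ne_zero_of_mul hc)
    have hpu : ¬ p ∣ u := fun h => hpa (dvd_mul_of_dvd_left h v)
    have hpv : ¬ p ∣ v := fun h => hpa (dvd_mul_of_dvd_right h u)
    by_cases hpm : p ∣ m
    · have hpn : ¬ p ∣ n := (hp.coprime_iff_not_dvd).1 (hmn.coprime_dvd_left hpm)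
      refine ⟨p ^ k * u, v, by ring, ?_⟩
      rw [mul_assoc]
      refine Nat.Coprime.mul_left (Nat.Coprime.pow_left k ?_) huv
      exact (hp.coprime_iff_not_dvd).2 fun h => (hp.dvd_mul.1 h).elim hpv hpn
    · refine ⟨u, p ^ k * v, by ring, ?_⟩
      rw [mul_assoc]
      refine Nat.Coprime.mul_right (Nat.Coprime.pow_right k ?_) huv
      exact ((hp.coprime_iff_not_dvd).2 fun h => (hp.dvd_mul.1 h).elim hpu hpm).symm

theorem apply_mul_mul_mul_apply_eq {R : Type*} [CommMonoid R] (f : ℕ → R)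
    (hf : ∀ m n : ℕ, m.Coprime n → f (m * n) = f m * f n) {m n : ℕ} (hmn : m.Coprime n)
    (c : ℕ) : f (c * (m * n)) * f c = f (c * m) * f (c * n) := by
  rcases eq_or_ne c 0 with rfl | hc
  · simp
  obtain ⟨u, v, rfl, huv⟩ := hmn.exists_mul_eq_and_coprime_mul_mul hc
  have hum_v : (u * m).Coprime v := huv.coprime_mul_right_right
  have hu_vn : u.Coprime (v * n) := huv.coprime_mul_right
  have hu_v : u.Coprime v := hum_v.coprime_mul_right
  rw [show u * v * (m * n) = u * m * (v * n) by ring, show u * v * m = u * m * v by ring,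
    mul_assoc u v n, hf _ _ huv, hf _ _ hum_v, hf _ _ hu_vn, hf _ _ hu_v]
  ac_rfl

theorem stmt_0_general (f : ℕ → ℂ)
    (hf : ∀ m n : ℕ, Nat.Coprime m n → f (m * n) = f m * f n)
    (c : ℕ) (hfc : f c ≠ 0) :
    (f (c * 1) / f c = 1) ∧
      ∀ m n : ℕ, Nat.Coprime m n →
        f (c * (m * n)) / f c = (f (c * m) / f c) * (f (c * n) / f c) := by
  refine ⟨by rw [mul_one, div_self hfc], fun m n hmn => ?_⟩
  rw [div_mul_div_comm, div_eq_div_iff hfc (mul_ne_zero hfc hfc)]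
  linear_combination f c * apply_mul_mul_mul_apply_eq f hf hmn c

theorem stmt_0 (f : ℕ → ℂ) (hf1 : f 1 = 1)
    (hf : ∀ m n : ℕ, Nat.Coprime m n → f (m * n) = f m * f n)
    (c : ℕ) (hc : 0 < c) (hfc : f c ≠ 0) :
    (f (c * 1) / f c = 1) ∧
      ∀ m n : ℕ, Nat.Coprime m n →
        f (c * (m * n)) / f c = (f (c * m) / f c) * (f (c * n) / f c) :=
  stmt_0_general f hf c hfc
end

section
/- Let p be a prime, k ≥ 1 an integer, and s > 1 a real number. Then 1 + Σ_{ℓ≥1} ((k+1+ℓ)(ℓ+1)/(k+1)) · p^{-ℓs} = (1 - p^{-s})^{-3} · (1 - ((k-1)/(k+1)) p^{-s}). -/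
/-! With `c = k + 1` and `x = p ^ (-s)`, the leading `1` is the `m = 0` term of
`∑ₘ (c + m)(m + 1)/c · xᵐ`, and `(c + m)(m + 1)/c = (1 - 2/c)(m + 1) + (2/c)·C(m + 2, 2)`
splits this series into the two binomial series `∑ C(m + j, j) xᵐ = (1 - x)⁻ʲ⁻¹`,
`j = 1, 2`. -/

theorem hasSum_add_mul_succ_div_mul_geometric {𝕜 : Type*} [NormedField 𝕜] [CharZero 𝕜]
    [HasSummableGeomSeries 𝕜] {c x : 𝕜} (hc : c ≠ 0) (hx : ‖x‖ < 1) :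
    HasSum (fun m : ℕ ↦ (c + m) * (m + 1) / c * x ^ m)
      ((1 - x)⁻¹ ^ 3 * (1 - (c - 2) / c * x)) := by
  have hx₁ : 1 - x ≠ 0 := sub_ne_zero.2 fun h ↦ by simp [← h] at hx
  have h₁ := (hasSum_choose_mul_geometric_of_norm_lt_one 1 hx).mul_left (1 - 2 / c)
  have h₂ := (hasSum_choose_mul_geometric_of_norm_lt_one 2 hx).mul_left (2 / c)
  have hterm : (fun m : ℕ ↦ (c + m) * (m + 1) / c * x ^ m) = fun m ↦
      (1 - 2 / c) * ((m + 1).choose 1 * x ^ m) + 2 / c * ((m + 2).choose 2 * x ^ m) := by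
    funext m
    rw [Nat.choose_one_right, Nat.cast_choose_two]
    push_cast
    field_simp
    ring
  have hsum : (1 - x)⁻¹ ^ 3 * (1 - (c - 2) / c * x) =
      (1 - 2 / c) * (1 / (1 - x) ^ (1 + 1)) + 2 / c * (1 / (1 - x) ^ (2 + 1)) := by
    field_simp
    ring
  rw [hterm, hsum]
  exact h₁.add h₂

theorem Real.rpow_neg_natCast_mul {x : ℝ} (hx : 0 ≤ x) (n : ℕ) (s : ℝ) :
    x ^ (-(n * s)) = (x ^ (-s)) ^ n := by
  rw [← Real.rpow_mul_natCast hx, neg_mul_eq_mul_neg, mul_comm]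

theorem stmt_5_general (p : ℕ) (hp : p.Prime) (k : ℕ) (s : ℝ) (hs : 1 < s) :
    1 + ∑' ℓ : ℕ,
        (((k : ℝ) + 1 + ((ℓ : ℝ) + 1)) * (((ℓ : ℝ) + 1) + 1) / ((k : ℝ) + 1))
          * (p : ℝ) ^ (-(((ℓ : ℝ) + 1) * s))
      = (1 - (p : ℝ) ^ (-s))⁻¹ ^ 3 * (1 - (((k : ℝ) - 1) / ((k : ℝ) + 1)) * (p : ℝ) ^ (-s)) := by
  have hp₁ : (1 : ℝ) < p := by exact_mod_cast hp.one_lt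
  have hx : ‖(p : ℝ) ^ (-s)‖ < 1 := by
    rw [Real.norm_of_nonneg (by positivity)]
    exact Real.rpow_lt_one_of_one_lt_of_neg hp₁ (by linarith)
  have hc : (k : ℝ) + 1 ≠ 0 := by positivity
  have key := hasSum_add_mul_succ_div_mul_geometric hc hx
  rw [show (k : ℝ) - 1 = k + 1 - 2 by ring, ← key.tsum_eq, key.summable.tsum_eq_zero_add]
  congr 1
  · simp [hc]
  · refine tsum_congr fun ℓ ↦ ?_
    rw [← Real.rpow_neg_natCast_mul (by positivity)]
    push_cast
    ring

theorem stmt_5 (p : ℕ) (hp : p.Prime) (k : ℕ) (hk : 1 ≤ k) (s : ℝ) (hs : 1 < s) :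
    1 + ∑' ℓ : ℕ,
        (((k : ℝ) + 1 + ((ℓ : ℝ) + 1)) * (((ℓ : ℝ) + 1) + 1) / ((k : ℝ) + 1))
          * (p : ℝ) ^ (-(((ℓ : ℝ) + 1) * s))
      = (1 - (p : ℝ) ^ (-s))⁻¹ ^ 3 * (1 - (((k : ℝ) - 1) / ((k : ℝ) + 1)) * (p : ℝ) ^ (-s)) :=
  stmt_5_general p hp k s hs
end

section
/- Let c, d be coprime positive integers and s a real number with s > 1. Then Σ_{n≥1} τ(cn)τ(dn)/n^s = τ(cd) · (ζ(s)⁴/ζ(2s)) · Π_{p^k ∥ cd} (1 + p^{-s})^{-1} (1 - ((k-1)/(k+1)) p^{-s}), where the product runs over primes p with p^k exactly dividing cd. -/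
/-!
For coprime `c, d` the function `n ↦ τ(cn) τ(dn) / τ(cd)` is multiplicative, and since `p` divides
at most one of `c, d`, at a prime power it equals `(a + e + 1)(e + 1) / (a + 1)` with
`a = v_p(cd)`. Its Euler factor at `p` is therefore `((a + 1) - (a - 1) x) / ((a + 1)(1 - x)³)`
with `x = p^{-s}`: the Euler factor `(1 - x²) / (1 - x)⁴` of `ζ(s)⁴ / ζ(2s)` times
`(1 + x)⁻¹ (1 - (a - 1) / (a + 1) · x)`, which is `1` for `p ∤ cd`. Absolute convergence comes from
`τ(cn) τ(dn) ≤ τ(cd) τ(n)² ≤ τ(cd) (σ₀ * σ₀)(n)`.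
-/

open Finset ArithmeticFunction LSeries Complex
open scoped ArithmeticFunction.sigma ArithmeticFunction.zeta LSeries.notation

namespace Nat

theorem card_divisors_mul_le (m n : ℕ) : #(m * n).divisors ≤ #m.divisors * #n.divisors := by
  rw [divisors_mul]
  exact card_mul_le

-- `τ(n)² = ∑_{i ∣ n} τ(n) ≤ ∑_{i ∣ n} τ(i) τ(n / i)`
theorem sq_card_divisors_le (n : ℕ) : #n.divisors ^ 2 ≤ (σ 0 * σ 0) n := by
  rw [mul_apply, sum_divisorsAntidiagonal fun i j => σ 0 i * σ 0 j, sq, ← smul_eq_mul,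
    ← sum_const]
  refine sum_le_sum fun i hi => ?_
  rw [sigma_zero_apply, sigma_zero_apply]
  conv_lhs => rw [← Nat.mul_div_cancel' (dvd_of_mem_divisors hi)]
  exact card_divisors_mul_le _ _

theorem Coprime.factorization_eq_zero_or {m n : ℕ} (hmn : m.Coprime n) (p : ℕ) :
    m.factorization p = 0 ∨ n.factorization p = 0 := by
  refine or_iff_not_imp_left.2 fun hm => factorization_eq_zero_of_not_dvd fun hpn => ?_
  have hp : p ∈ m.primeFactors := support_factorization m ▸ Finsupp.mem_support_iff.2 hm
  exact (prime_of_mem_primeFactors hp).one_lt.ne' <|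
    eq_one_of_dvd_coprimes hmn (dvd_of_mem_primeFactors hp) hpn

theorem card_divisors_eq_prod_primeFactors_of_dvd {m n : ℕ} (hn : n ≠ 0) (h : m ∣ n) :
    #m.divisors = ∏ p ∈ n.primeFactors, (m.factorization p + 1) := by
  rw [card_divisors (ne_zero_of_dvd_ne_zero hn h)]
  refine prod_subset (primeFactors_mono h hn) fun p _ hp => ?_
  rw [← support_factorization, Finsupp.notMem_support_iff] at hp
  simp [hp]

theorem Coprime.card_divisors_mul_mul_card_divisors {a m n : ℕ} (hmn : m.Coprime n) (ha : a ≠ 0)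
    (hm : m ≠ 0) (hn : n ≠ 0) :
    #(a * (m * n)).divisors * #a.divisors = #(a * m).divisors * #(a * n).divisors := by
  have hamn : a * (m * n) ≠ 0 := by positivity
  rw [card_divisors_eq_prod_primeFactors_of_dvd hamn dvd_rfl,
    card_divisors_eq_prod_primeFactors_of_dvd hamn (Dvd.intro _ rfl),
    card_divisors_eq_prod_primeFactors_of_dvd hamn (mul_dvd_mul_left a (Dvd.intro _ rfl)),
    card_divisors_eq_prod_primeFactors_of_dvd hamn (mul_dvd_mul_left a (Dvd.intro_left _ rfl)),
    ← prod_mul_distrib, ← prod_mul_distrib]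
  refine prod_congr rfl fun p _ => ?_
  simp only [factorization_mul ha (mul_ne_zero hm hn), factorization_mul hm hn,
    factorization_mul ha hm, factorization_mul ha hn, Finsupp.add_apply]
  rcases hmn.factorization_eq_zero_or p with h | h <;> rw [h] <;> ring

theorem Coprime.card_divisors_mul_prime_pow {c p : ℕ} (h : c.Coprime p) (hp : p.Prime) (k : ℕ) :
    #(c * p ^ k).divisors = #c.divisors * (k + 1) := by
  rw [(h.pow_right k).card_divisors_mul, ← sigma_zero_apply (p ^ k), sigma_zero_apply_prime_pow hp]

theorem card_divisors_mul_prime_pow_mul {c p : ℕ} (hp : p.Prime) (hc : c ≠ 0) (e : ℕ) :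
    #(c * p ^ e).divisors * (c.factorization p + 1)
      = #c.divisors * (c.factorization p + e + 1) := by
  have hm : (ordCompl[p] c).Coprime p := (coprime_ordCompl hp hc).symm
  have hc' : c = ordCompl[p] c * p ^ c.factorization p := by
    rw [mul_comm, ordProj_mul_ordCompl_eq_self]
  have hce : c * p ^ e = ordCompl[p] c * p ^ (c.factorization p + e) := by
    rw [pow_add, ← mul_assoc, ← hc']
  have hc₀ : #c.divisors = #(ordCompl[p] c).divisors * (c.factorization p + 1) := by
    conv_lhs => rw [hc', hm.card_divisors_mul_prime_pow hp]
  rw [hce, hm.card_divisors_mul_prime_pow hp, hc₀]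
  ring

theorem Coprime.card_divisors_mul_prime_pow_mul_card_divisors_mul_prime_pow {c d p : ℕ}
    (hcd : c.Coprime d) (hc : c ≠ 0) (hd : d ≠ 0) (hp : p.Prime) (e : ℕ) :
    #(c * p ^ e).divisors * #(d * p ^ e).divisors * ((c * d).factorization p + 1)
      = #(c * d).divisors * (((c * d).factorization p + e + 1) * (e + 1)) := by
  have hc' := card_divisors_mul_prime_pow_mul hp hc e
  have hd' := card_divisors_mul_prime_pow_mul hp hd e
  rw [factorization_mul_apply_of_coprime hcd, hcd.card_divisors_mul]
  rcases hcd.factorization_eq_zero_or p with h | h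
  · rw [h, zero_add, mul_one] at hc'
    rw [h, hc']
    linear_combination (#c.divisors * (e + 1)) * hd'
  · rw [h, zero_add, mul_one] at hd'
    rw [h, hd']
    linear_combination (#d.divisors * (e + 1)) * hc'

end Nat

theorem ArithmeticFunction.LSeriesSummable_sigma_zero_mul_sigma_zero {s : ℂ} (hs : 1 < s.re) :
    LSeriesSummable ↗(σ 0 * σ 0) s := by
  have hζ : LSeriesSummable ↗(ζ : ArithmeticFunction ℂ) s := by
    simpa only [natCoe_apply] using LSeriesSummable_zeta_iff.mpr hs
  have hσ : ((σ 0 * σ 0 : ArithmeticFunction ℕ) : ArithmeticFunction ℂ)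
      = ↑ζ * ↑ζ * (↑ζ * ↑ζ) := by
    rw [← zeta_mul_pow_eq_sigma, pow_zero_eq_zeta, natCoe_mul, natCoe_mul]
  simp only [← natCoe_apply (R := ℂ), hσ]
  exact LSeriesSummable_mul (LSeriesSummable_mul hζ hζ) (LSeriesSummable_mul hζ hζ)

theorem LSeries.eulerProduct_hasProd {f : ℕ → ℂ} (hf₁ : f 1 = 1)
    (hmul : ∀ {m n : ℕ}, m.Coprime n → f (m * n) = f m * f n) {s : ℂ}
    (hsum : Summable fun n => ‖term f s n‖) :
    HasProd (fun p : Nat.Primes => ∑' e : ℕ, f (p ^ e) * ((p : ℂ) ^ (-s)) ^ e) (LSeries f s) := by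
  have hterm_mul {m n : ℕ} (hmn : m.Coprime n) : term f s (m * n) = term f s m * term f s n := by
    rcases eq_or_ne m 0 with rfl | hm
    · simp
    rcases eq_or_ne n 0 with rfl | hn
    · simp
    rw [term_of_ne_zero (mul_ne_zero hm hn), term_of_ne_zero hm, term_of_ne_zero hn, hmul hmn,
      Nat.cast_mul, natCast_mul_natCast_cpow, mul_div_mul_comm]
  have hterm_prime_pow (p e : ℕ) (hp : p ≠ 0) :
      term f s (p ^ e) = f (p ^ e) * ((p : ℂ) ^ (-s)) ^ e := by
    rw [term_of_ne_zero (pow_ne_zero e hp), Nat.cast_pow, ← natCast_cpow_natCast_mul,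
      cpow_nat_mul, cpow_neg, inv_pow, div_eq_mul_inv]
  convert EulerProduct.eulerProduct_hasProd (by simp [hf₁]) hterm_mul hsum (term_zero f s) using 1
  · ext p
    exact tsum_congr fun e => (hterm_prime_pow p e p.prop.ne_zero).symm
  · rfl

theorem one_sub_ne_zero_of_norm_lt_one {R : Type*} [NormedRing R] [NormOneClass R] {x : R}
    (hx : ‖x‖ < 1) : 1 - x ≠ 0 :=
  fun h => by simp [← eq_of_sub_eq_zero h] at hx

theorem one_add_ne_zero_of_norm_lt_one {R : Type*} [NormedRing R] [NormOneClass R] {x : R}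
    (hx : ‖x‖ < 1) : 1 + x ≠ 0 :=
  fun h => by simp [eq_neg_of_add_eq_zero_right h] at hx

theorem hasSum_add_mul_geometric {𝕜 : Type*} [NormedField 𝕜] {x : 𝕜} (hx : ‖x‖ < 1) (a : 𝕜) :
    HasSum (fun e : ℕ => (a + e + 1) * (e + 1) * x ^ e) ((a + 1 - (a - 1) * x) / (1 - x) ^ 3) := by
  have hx₁ := one_sub_ne_zero_of_norm_lt_one hx
  have hchoose (e : ℕ) : ((e + 2).choose 2 : 𝕜) * 2 = (e + 1) * (e + 2) := by
    have h : (e + 2).choose 2 * 2 = (e + 1) * (e + 2) := by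
      simpa [Nat.choose_one_right, mul_comm] using (Nat.add_one_mul_choose_eq (e + 1) 1).symm
    simpa using congrArg (Nat.cast : ℕ → 𝕜) h
  have hterm : (fun e : ℕ => (a + e + 1) * (e + 1) * x ^ e) = fun e : ℕ =>
      2 * ((e + 2).choose 2 * x ^ e) + (a - 1) * ((e + 1).choose 1 * x ^ e) := by
    ext e
    rw [Nat.choose_one_right]
    push_cast
    linear_combination (-x ^ e) * hchoose e
  have hsum : (a + 1 - (a - 1) * x) / (1 - x) ^ 3
      = 2 * (1 / (1 - x) ^ (2 + 1)) + (a - 1) * (1 / (1 - x) ^ (1 + 1)) := by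
    field_simp
    ring
  rw [hterm, hsum]
  exact ((hasSum_choose_mul_geometric_of_norm_lt_one 2 hx).mul_left 2).add
    ((hasSum_choose_mul_geometric_of_norm_lt_one 1 hx).mul_left (a - 1))

theorem hasProd_primes_of_eq_one {α : Type*} [CommMonoid α] [TopologicalSpace α] {f : ℕ → α}
    {P : Finset ℕ} (hP : ∀ p ∈ P, p.Prime) (hf : ∀ p : Nat.Primes, (p : ℕ) ∉ P → f p = 1) :
    HasProd (fun p : Nat.Primes => f p) (∏ p ∈ P, f p) := by
  rw [← prod_subtype_of_mem f hP]
  exact hasProd_prod_of_ne_finset_one fun p hp => hf p fun h => hp (mem_subtype.2 h)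

def divisorCountProduct (c d n : ℕ) : ℕ := #(c * n).divisors * #(d * n).divisors

section divisorCountProduct

variable {c d : ℕ}

theorem divisorCountProduct_one (hcd : c.Coprime d) :
    divisorCountProduct c d 1 = #(c * d).divisors := by
  simp [divisorCountProduct, hcd.card_divisors_mul]

theorem divisorCountProduct_mul (hcd : c.Coprime d) (hc : c ≠ 0) (hd : d ≠ 0) {m n : ℕ}
    (hmn : m.Coprime n) :
    divisorCountProduct c d (m * n) * #(c * d).divisors
      = divisorCountProduct c d m * divisorCountProduct c d n := by
  rcases eq_or_ne m 0 with rfl | hm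
  · simp [divisorCountProduct]
  rcases eq_or_ne n 0 with rfl | hn
  · simp [divisorCountProduct]
  have hc' := hmn.card_divisors_mul_mul_card_divisors hc hm hn
  have hd' := hmn.card_divisors_mul_mul_card_divisors hd hm hn
  rw [divisorCountProduct, divisorCountProduct, divisorCountProduct, hcd.card_divisors_mul]
  calc _ = (#(c * (m * n)).divisors * #c.divisors)
          * (#(d * (m * n)).divisors * #d.divisors) := by ring
    _ = _ := by rw [hc', hd']; ring

theorem divisorCountProduct_le (hcd : c.Coprime d) (n : ℕ) :
    divisorCountProduct c d n ≤ #(c * d).divisors * (σ 0 * σ 0) n := by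
  calc divisorCountProduct c d n
      ≤ (#c.divisors * #n.divisors) * (#d.divisors * #n.divisors) :=
        Nat.mul_le_mul (Nat.card_divisors_mul_le c n) (Nat.card_divisors_mul_le d n)
    _ = #(c * d).divisors * #n.divisors ^ 2 := by rw [hcd.card_divisors_mul]; ring
    _ ≤ #(c * d).divisors * (σ 0 * σ 0) n := Nat.mul_le_mul_left _ (Nat.sq_card_divisors_le n)

theorem LSeriesSummable_divisorCountProduct (hcd : c.Coprime d) {s : ℂ} (hs : 1 < s.re) :
    LSeriesSummable ↗(divisorCountProduct c d) s := by
  refine Summable.of_norm_bounded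
    ((LSeriesSummable_sigma_zero_mul_sigma_zero hs).smul (#(c * d).divisors : ℂ)).norm
    fun n => norm_term_le s ?_
  have := divisorCountProduct_le hcd n
  simp only [Pi.smul_apply, smul_eq_mul, norm_mul, Complex.norm_natCast]
  exact_mod_cast this

theorem hasSum_divisorCountProduct_prime_pow (hcd : c.Coprime d) (hc : c ≠ 0) (hd : d ≠ 0)
    {p : ℕ} (hp : p.Prime) {x : ℂ} (hx : ‖x‖ < 1) :
    HasSum (fun e : ℕ => ((#(c * d).divisors : ℂ)⁻¹ • ↗(divisorCountProduct c d)) (p ^ e) * x ^ e)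
      (((1 - x)⁻¹) ^ 4 / (1 - x ^ 2)⁻¹ * ((1 + x)⁻¹ *
        (1 - (((c * d).factorization p : ℂ) - 1) / (((c * d).factorization p : ℂ) + 1) * x))) := by
  set a := (c * d).factorization p
  have hτ : (#(c * d).divisors : ℂ) ≠ 0 :=
    Nat.cast_ne_zero.2 (Nat.nonempty_divisors.2 (mul_ne_zero hc hd)).card_pos.ne'
  have ha : (a : ℂ) + 1 ≠ 0 := by exact_mod_cast a.succ_ne_zero
  have hx₁ := one_sub_ne_zero_of_norm_lt_one hx
  have hx₂ := one_add_ne_zero_of_norm_lt_one hx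
  have hterm (e : ℕ) : ((#(c * d).divisors : ℂ)⁻¹ • ↗(divisorCountProduct c d)) (p ^ e) * x ^ e
      = (a + e + 1) * (e + 1) * x ^ e / (a + 1) := by
    have h := congrArg (Nat.cast : ℕ → ℂ)
      (hcd.card_divisors_mul_prime_pow_mul_card_divisors_mul_prime_pow hc hd hp e)
    push_cast at h
    simp only [Pi.smul_apply, smul_eq_mul, divisorCountProduct]
    push_cast
    field_simp
    linear_combination x ^ e * h
  have hsum : ((1 - x)⁻¹) ^ 4 / (1 - x ^ 2)⁻¹ * ((1 + x)⁻¹ * (1 - (a - 1) / (a + 1) * x))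
      = (a + 1 - (a - 1) * x) / (1 - x) ^ 3 / (a + 1) := by
    field_simp
    ring
  rw [funext hterm, hsum]
  exact (hasSum_add_mul_geometric hx (a : ℂ)).div_const _

theorem LSeries_divisorCountProduct (hcd : c.Coprime d) (hc : c ≠ 0) (hd : d ≠ 0) {s : ℂ}
    (hs : 1 < s.re) :
    LSeries ↗(divisorCountProduct c d) s
      = #(c * d).divisors * (riemannZeta s ^ 4 / riemannZeta (2 * s)) *
          ∏ p ∈ (c * d).primeFactors, (1 + (p : ℂ) ^ (-s))⁻¹ *
            (1 - (((c * d).factorization p : ℂ) - 1) / (((c * d).factorization p : ℂ) + 1)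
              * (p : ℂ) ^ (-s)) := by
  set τ : ℂ := (#(c * d).divisors : ℂ)
  set correction : ℕ → ℂ := fun p => (1 + (p : ℂ) ^ (-s))⁻¹ *
    (1 - (((c * d).factorization p : ℂ) - 1) / (((c * d).factorization p : ℂ) + 1)
      * (p : ℂ) ^ (-s))
  have hτ : τ ≠ 0 :=
    Nat.cast_ne_zero.2 (Nat.nonempty_divisors.2 (mul_ne_zero hc hd)).card_pos.ne'
  have hx (p : Nat.Primes) : ‖(p : ℂ) ^ (-s)‖ < 1 :=
    (norm_prime_cpow_le_one_half p hs).trans_lt (by norm_num)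
  have hlhs : HasProd (fun p : Nat.Primes => ∑' e : ℕ, (τ⁻¹ • ↗(divisorCountProduct c d)) (p ^ e)
      * ((p : ℂ) ^ (-s)) ^ e) (LSeries (τ⁻¹ • ↗(divisorCountProduct c d)) s) := by
    refine LSeries.eulerProduct_hasProd ?_ ?_
      ((LSeriesSummable_divisorCountProduct hcd hs).smul _).norm
    · simp [divisorCountProduct_one hcd, τ, hτ]
    · intro m n hmn
      have h := congrArg (Nat.cast : ℕ → ℂ) (divisorCountProduct_mul hcd hc hd hmn)
      push_cast at h
      simp only [Pi.smul_apply, smul_eq_mul]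
      field_simp
      linear_combination h
  have hcorrection : HasProd (fun p : Nat.Primes => correction p)
      (∏ p ∈ (c * d).primeFactors, correction p) := by
    refine hasProd_primes_of_eq_one (fun p hp => Nat.prime_of_mem_primeFactors hp) fun p hp => ?_
    have h0 : (c * d).factorization p = 0 := Finsupp.notMem_support_iff.1 hp
    have h1 := one_add_ne_zero_of_norm_lt_one (hx p)
    simp only [correction, h0]
    field_simp
    ring
  have hrhs := (((riemannZeta_eulerProduct_hasProd hs).pow 4).div₀
    (riemannZeta_eulerProduct_hasProd (s := 2 * s) (by simp; linarith))
    (riemannZeta_ne_zero_of_one_lt_re (by simp; linarith))).mul hcorrection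
  rw [← mul_inv_cancel_left₀ hτ (LSeries _ s), ← LSeries_smul, hlhs.unique (hrhs.congr_fun ?_),
    mul_assoc]
  intro p
  rw [(hasSum_divisorCountProduct_prime_pow hcd hc hd p.prop (hx p)).tsum_eq, ← mul_neg,
    cpow_ofNat_mul]

end divisorCountProduct

theorem stmt_6 (c d : ℕ) (hc : 0 < c) (hd : 0 < d) (hcd : Nat.Coprime c d)
    (s : ℝ) (hs : 1 < s) :
    ∑' n : ℕ, (((c * (n + 1)).divisors.card * ((d * (n + 1)).divisors.card) : ℕ) : ℂ)
        / ((n : ℂ) + 1) ^ (s : ℂ)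
      = ((c * d).divisors.card : ℂ) * (riemannZeta s ^ 4 / riemannZeta (2 * s)) *
          ∏ p ∈ (c * d).primeFactors,
            (1 + (p : ℂ) ^ (-(s : ℂ)))⁻¹ *
              (1 - ((((c * d).factorization p : ℂ) - 1) / (((c * d).factorization p : ℂ) + 1))
                * (p : ℂ) ^ (-(s : ℂ))) := by
  have hs' : 1 < (s : ℂ).re := by simpa using hs
  rw [← LSeries_divisorCountProduct hcd hc.ne' hd.ne' hs', LSeries,
    (LSeriesSummable_divisorCountProduct hcd hs').tsum_eq_zero_add, term_zero, zero_add]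
  refine tsum_congr fun n => ?_
  rw [term_of_ne_zero n.add_one_ne_zero, divisorCountProduct]
  push_cast
  rfl
end

section
/- Let φ be a completely multiplicative arithmetic function with 0 < p^{1/4}·φ(p) ≤ 1 for every prime p, and let S be a finite set of positive integers. Then the matrix M with entries M(a,b) = φ(lcm(a,b)/gcd(a,b)) / √(gcd(a,b)), indexed by a, b ∈ S, is positive semidefinite. -/
/-!
With `f = gcdWeight φ`, i.e. `f n = 1 / (φ n ^ 2 * √n)`, complete multiplicativity of `φ` gives
`M a b = φ a * φ b * f (gcd a b)`, so `M = D G D` with `D` diagonal and `G` the GCD matrix of `f`.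
The hypothesis at primes says exactly `f p ≥ 1`; as `f` is completely multiplicative,
`g = μ * f` then satisfies `g (p ^ k) = f p ^ (k - 1) * (f p - 1) ≥ 0`. Möbius inversion writes
`G = ∑_d g d • v_d v_dᵀ` with `v_d` the indicator of the multiples of `d`, a nonnegative
combination of positive semidefinite rank-one matrices.
-/

open Finset Matrix
open scoped ArithmeticFunction.Moebius ArithmeticFunction.zeta

namespace ArithmeticFunction

theorem IsMultiplicative.nonneg_of_prime_pow {R : Type*} [CommSemiring R] [PartialOrder R]
    [IsOrderedRing R] {g : ArithmeticFunction R} (hg : g.IsMultiplicative)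
    (h : ∀ p k : ℕ, p.Prime → 0 < k → 0 ≤ g (p ^ k)) (n : ℕ) : 0 ≤ g n := by
  induction n using Nat.recOnPosPrimePosCoprime with
  | zero => simp
  | one => simp [hg.map_one]
  | prime_pow p k hp hk => exact h p k hp hk
  | coprime a b _ _ hab ha hb => rw [hg.map_mul_of_coprime hab]; exact mul_nonneg ha hb

theorem coe_moebius_mul_apply_prime_pow_succ {R : Type*} [CommRing R] (F : ArithmeticFunction R)
    {p : ℕ} (hp : p.Prime) (k : ℕ) :
    ((μ : ArithmeticFunction R) * F) (p ^ (k + 1)) = F (p ^ (k + 1)) - F (p ^ k) := by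
  rw [mul_apply, Nat.sum_divisorsAntidiagonal (fun d e => (μ : ArithmeticFunction R) d * F e),
    Nat.sum_divisors_prime_pow hp, sum_range_succ', sum_range_succ', sum_eq_zero]
  · simp [moebius_apply_prime hp, pow_succ, hp.pos, sub_eq_neg_add]
  · intro i _
    simp [moebius_apply_prime_pow hp (Nat.succ_ne_zero (i + 1))]

theorem coe_moebius_mul_nonneg_of_prime_pow_mono {F : ArithmeticFunction ℝ}
    (hF : F.IsMultiplicative)
    (hmono : ∀ p k : ℕ, p.Prime → F (p ^ k) ≤ F (p ^ (k + 1))) (n : ℕ) :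
    0 ≤ ((μ : ArithmeticFunction ℝ) * F) n := by
  refine (isMultiplicative_moebius.intCast.mul hF).nonneg_of_prime_pow (fun p k hp hk => ?_) n
  obtain ⟨k, rfl⟩ := Nat.exists_eq_add_of_lt hk
  rw [zero_add, coe_moebius_mul_apply_prime_pow_succ F hp]
  exact sub_nonneg.mpr (hmono p k hp)

end ArithmeticFunction

theorem Matrix.posSemidef_apply_gcd_of_moebius_mul_nonneg {ι : Type*} [Fintype ι]
    {f : ArithmeticFunction ℝ} (hf : ∀ n, 0 ≤ ((μ : ArithmeticFunction ℝ) * f) n)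
    (u : ι → ℕ) (hu : ∀ i, u i ≠ 0) :
    (of fun i j => f ((u i).gcd (u j))).PosSemidef := by
  set g := (μ : ArithmeticFunction ℝ) * f
  let v : ℕ → ι → ℝ := fun d i => if d ∣ u i then 1 else 0
  have hfg : f = (ζ : ArithmeticFunction ℝ) * g := by
    rw [← mul_assoc, ArithmeticFunction.coe_zeta_mul_coe_moebius, one_mul]
  have hentry : ∀ d i j, (g d • vecMulVec (v d) (star (v d))) i j =
      if d ∣ (u i).gcd (u j) then g d else 0 := by
    intro d i j
    simp [v, vecMulVec_apply, Nat.dvd_gcd_iff, ← ite_and, and_comm]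
  have hsum : (of fun i j => f ((u i).gcd (u j))) =
      ∑ d ∈ univ.biUnion fun i => (u i).divisors, g d • vecMulVec (v d) (star (v d)) := by
    ext i j
    rw [hfg, of_apply, ArithmeticFunction.coe_zeta_mul_apply, Matrix.sum_apply]
    simp_rw [hentry, ← sum_filter]
    congr 1
    ext d
    simp only [mem_filter, mem_biUnion, mem_univ, true_and, Nat.mem_divisors, hu, ne_eq,
      not_false_eq_true, and_true, Nat.gcd_eq_zero_iff, false_and]
    exact ⟨fun h => ⟨⟨i, h.trans (Nat.gcd_dvd_left _ _)⟩, h⟩, And.right⟩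
  rw [hsum]
  exact posSemidef_sum _ fun d _ => (posSemidef_vecMulVec_self_star (v d)).smul (hf d)

noncomputable def gcdWeight (φ : ℕ → ℝ) : ArithmeticFunction ℝ :=
  ⟨fun n => (φ n ^ 2 * √n)⁻¹, by simp⟩

section CompletelyMultiplicative

variable {φ : ℕ → ℝ}

theorem gcdWeight_apply (n : ℕ) : gcdWeight φ n = (φ n ^ 2 * √n)⁻¹ := rfl

theorem gcdWeight_mul (hφ : ∀ m n : ℕ, φ (m * n) = φ m * φ n) (m n : ℕ) :
    gcdWeight φ (m * n) = gcdWeight φ m * gcdWeight φ n := by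
  simp only [gcdWeight_apply, hφ, Nat.cast_mul, Real.sqrt_mul (Nat.cast_nonneg m), ← mul_inv]
  ring

theorem gcdWeight_nonneg (n : ℕ) : 0 ≤ gcdWeight φ n :=
  inv_nonneg.mpr (by positivity)

theorem isMultiplicative_gcdWeight (hφ1 : φ 1 = 1) (hφ : ∀ m n : ℕ, φ (m * n) = φ m * φ n) :
    (gcdWeight φ).IsMultiplicative :=
  ⟨by simp [gcdWeight_apply, hφ1], fun {m n} _ => gcdWeight_mul hφ m n⟩

theorem pos_of_prime_pos (hφ1 : φ 1 = 1) (hφ : ∀ m n : ℕ, φ (m * n) = φ m * φ n)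
    (hp : ∀ p : ℕ, p.Prime → 0 < φ p) {n : ℕ} (hn : 0 < n) : 0 < φ n := by
  induction n using Nat.recOnMul with
  | zero => exact absurd hn (lt_irrefl 0)
  | one => simp [hφ1]
  | prime p hp' => exact hp p hp'
  | mul a b ha hb =>
    rw [hφ]
    exact mul_pos (ha (Nat.pos_of_mul_pos_right hn)) (hb (Nat.pos_of_mul_pos_left hn))

theorem apply_lcm_div_gcd_div_sqrt (hφ : ∀ m n : ℕ, φ (m * n) = φ m * φ n) {a b : ℕ}
    (hab : φ (a.gcd b) ≠ 0) :
    φ (a.lcm b / a.gcd b) / √(a.gcd b) = φ a * φ b * gcdWeight φ (a.gcd b) := by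
  have hsplit : φ a * φ b = φ (a.gcd b) ^ 2 * φ (a.lcm b / a.gcd b) := by
    rw [← hφ, ← Nat.gcd_mul_lcm a b, sq, mul_assoc, ← hφ (a.gcd b),
      Nat.mul_div_cancel' ((Nat.gcd_dvd_left a b).trans (Nat.dvd_lcm_left a b)), hφ]
  rw [hsplit, gcdWeight_apply]
  field_simp

theorem one_le_gcdWeight_of_rpow_mul_le_one {p : ℕ}
    (h : 0 < (p : ℝ) ^ ((1:ℝ)/4) * φ p ∧ (p : ℝ) ^ ((1:ℝ)/4) * φ p ≤ 1) :
    1 ≤ gcdWeight φ p := by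
  have hsq : ((p : ℝ) ^ ((1:ℝ)/4) * φ p) ^ 2 = φ p ^ 2 * √p := by
    rw [mul_pow, ← Real.rpow_mul_natCast (Nat.cast_nonneg p), Real.sqrt_eq_rpow]
    norm_num
    ring
  rw [gcdWeight_apply, ← hsq]
  exact one_le_inv₀ (pow_pos h.1 2) |>.mpr (pow_le_one₀ h.1.le h.2)

end CompletelyMultiplicative

theorem stmt_11 (φ : ℕ → ℝ) (hφ1 : φ 1 = 1)
    (hφ : ∀ m n : ℕ, φ (m * n) = φ m * φ n)
    (hp : ∀ p : ℕ, p.Prime → 0 < (p : ℝ) ^ ((1:ℝ)/4) * φ p ∧ (p : ℝ) ^ ((1:ℝ)/4) * φ p ≤ 1)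
    (S : Finset ℕ) (hS : ∀ a ∈ S, 0 < a) :
    Matrix.PosSemidef
      (fun a b : {x // x ∈ S} =>
        φ (Nat.lcm a.1 b.1 / Nat.gcd a.1 b.1) / Real.sqrt (Nat.gcd a.1 b.1)) := by
  have hφpos : ∀ n, 0 < n → 0 < φ n := fun n =>
    pos_of_prime_pos hφ1 hφ fun p hp' => pos_of_mul_pos_right (hp p hp').1 (by positivity)
  have hmono (p k : ℕ) (hp' : p.Prime) : gcdWeight φ (p ^ k) ≤ gcdWeight φ (p ^ (k + 1)) := by
    rw [pow_succ, gcdWeight_mul hφ]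
    exact le_mul_of_one_le_right (gcdWeight_nonneg _)
      (one_le_gcdWeight_of_rpow_mul_le_one (hp p hp'))
  have hG := posSemidef_apply_gcd_of_moebius_mul_nonneg
    (ArithmeticFunction.coe_moebius_mul_nonneg_of_prime_pow_mono
      (isMultiplicative_gcdWeight hφ1 hφ) hmono) (fun a : S => a.1) (fun a => (hS a a.2).ne')
  refine (congrArg PosSemidef ?_).mp (hG.conjTranspose_mul_mul_same (diagonal fun a : S => φ a.1))
  funext a b
  rw [apply_lcm_div_gcd_div_sqrt hφ (hφpos _ (Nat.gcd_pos_of_pos_left _ (hS a a.2))).ne']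
  simp only [conjTranspose_eq_transpose_of_trivial, diagonal_transpose, mul_diagonal, diagonal_mul,
    of_apply]
  ring
end

section
/- Let φ be a completely multiplicative arithmetic function with 0 < p^{1/4}·φ(p) < 1 for all primes p, and let S be a finite divisor-closed set of positive integers (every divisor of an element of S lies in S). Then the matrix (φ(lcm(a,b)/gcd(a,b))/√gcd(a,b))_{a,b∈S} is positive definite, and its determinant equals Π_{d∈S} φ(d)²·(μ∗ψ)(d), where ψ is the completely multiplicative function with ψ(p) = 1/(√p·φ(p)²) and μ∗ψ is the Dirichlet convolution of the Möbius function with ψ. -/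
/-!
Since `φ (lcm a b / gcd a b) * φ (gcd a b) ^ 2 = φ a * φ b` and `ψ n = 1 / (√n * φ n ^ 2)`, the
entries of the matrix are `φ a * φ b * ψ (gcd a b)`, and by Möbius inversion
`ψ (gcd a b) = ∑_{d ∣ gcd a b} g d` with `g = μ ∗ ψ`. As `S` is divisor closed, this is Smith's
factorisation `B * diag g * Bᵀ` with `B a d = [d ∣ a] * φ a`, a triangular matrix for the order
of `S` by size. So the determinant is `∏ φ d ^ 2 * g d`, and the matrix is positive definite
because `g` is multiplicative with `g (p ^ k) = ψ p ^ (k - 1) * (ψ p - 1) > 0`, as `ψ p > 1`.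
-/

open Finset Matrix ArithmeticFunction
open scoped ArithmeticFunction.Moebius ArithmeticFunction.zeta

section CompletelyMultiplicative

variable {M : Type*} [Monoid M] {f g : ℕ → M}

lemma eq_of_map_mul_of_eq_on_primes (hf1 : f 1 = 1) (hf : ∀ m n, f (m * n) = f m * f n)
    (hg1 : g 1 = 1) (hg : ∀ m n, g (m * n) = g m * g n) (hfg : ∀ p : ℕ, p.Prime → f p = g p)
    {n : ℕ} (hn : n ≠ 0) : f n = g n := by
  induction n using induction_on_primes with
  | zero => exact absurd rfl hn
  | one => rw [hf1, hg1]
  | prime_mul p a hp ih => rw [hf, hg, hfg p hp, ih (right_ne_zero_of_mul hn)]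

lemma map_pow_of_map_mul (hf1 : f 1 = 1) (hf : ∀ m n, f (m * n) = f m * f n) (p k : ℕ) :
    f (p ^ k) = f p ^ k := by
  induction k with
  | zero => rwa [pow_zero, pow_zero]
  | succ k ih => rw [pow_succ, hf, ih, pow_succ]

end CompletelyMultiplicative

lemma pos_of_map_mul {R : Type*} [Semiring R] [PartialOrder R] [IsStrictOrderedRing R]
    {f : ℕ → R} (hf1 : f 1 = 1) (hf : ∀ m n, f (m * n) = f m * f n)
    (hp : ∀ p : ℕ, p.Prime → 0 < f p) {n : ℕ} (hn : n ≠ 0) : 0 < f n := by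
  induction n using induction_on_primes with
  | zero => exact absurd rfl hn
  | one => rw [hf1]; exact zero_lt_one
  | prime_mul p a hp' ih => rw [hf]; exact mul_pos (hp p hp') (ih (right_ne_zero_of_mul hn))

lemma map_zero_of_map_mul {R : Type*} [Ring R] [NoZeroDivisors R] {f : ℕ → R}
    (hf : ∀ m n, f (m * n) = f m * f n) {n : ℕ} (hn : f n ≠ 1) : f 0 = 0 := by
  have h : f 0 * (f n - 1) = 0 := by rw [mul_sub, mul_one, ← hf, zero_mul, sub_self]
  exact (mul_eq_zero.mp h).resolve_right (sub_ne_zero.mpr hn)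

namespace ArithmeticFunction

lemma moebius_mul_apply {R : Type*} [Ring R] (f : ArithmeticFunction R) (n : ℕ) :
    ((μ : ArithmeticFunction R) * f) n = ∑ e ∈ n.divisors, (μ e : R) * f (n / e) := by
  rw [mul_apply, Nat.sum_divisorsAntidiagonal (fun a b => (μ : ArithmeticFunction R) a * f b)]
  simp only [intCoe_apply]

lemma moebius_mul_apply_prime_pow {R : Type*} [CommRing R] (f : ArithmeticFunction R)
    {p k : ℕ} (hp : p.Prime) (hk : k ≠ 0) :
    ((μ : ArithmeticFunction R) * f) (p ^ k) = f (p ^ k) - f (p ^ (k - 1)) := by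
  obtain ⟨j, rfl⟩ := Nat.exists_eq_add_one_of_ne_zero hk
  rw [moebius_mul_apply, Nat.sum_divisors_prime_pow hp, sum_range_succ', sum_range_succ']
  have hvanish : ∀ i ∈ range j, (μ (p ^ (i + 1 + 1)) : R) * f (p ^ (j + 1) / p ^ (i + 1 + 1)) = 0 :=
    fun i _ => by
      rw [moebius_apply_prime_pow hp (by omega), if_neg (by omega), Int.cast_zero, zero_mul]
  have hdiv : p ^ (j + 1) / p = p ^ j := by rw [pow_succ, Nat.mul_div_cancel _ hp.pos]
  rw [sum_eq_zero hvanish]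
  simp only [zero_add, pow_one, pow_zero, Nat.div_one, hdiv, moebius_apply_prime hp,
    moebius_apply_one, Nat.add_sub_cancel]
  push_cast
  ring

lemma moebius_mul_pos {R : Type*} [CommRing R] [LinearOrder R] [IsStrictOrderedRing R]
    (f : ArithmeticFunction R) (hf1 : f 1 = 1) (hf : ∀ m n, f (m * n) = f m * f n)
    (hp : ∀ p : ℕ, p.Prime → 1 < f p) {n : ℕ} (hn : n ≠ 0) :
    0 < ((μ : ArithmeticFunction R) * f) n := by
  have hmult : f.IsMultiplicative := ⟨hf1, fun {m n} _ => hf m n⟩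
  rw [(isMultiplicative_moebius.intCast.mul hmult).multiplicative_factorization _ hn]
  refine prod_pos fun p hpn => ?_
  dsimp only
  have hpp : p.Prime := Nat.prime_of_mem_primeFactors hpn
  have hk : n.factorization p ≠ 0 := Finsupp.mem_support_iff.mp hpn
  rw [moebius_mul_apply_prime_pow f hpp hk, map_pow_of_map_mul hf1 hf,
    map_pow_of_map_mul hf1 hf, sub_pos]
  exact pow_lt_pow_right₀ (hp p hpp) (by omega)

lemma sum_divisors_moebius_mul {R : Type*} [Ring R] (f : ArithmeticFunction R) (n : ℕ) :
    ∑ d ∈ n.divisors, ((μ : ArithmeticFunction R) * f) d = f n := by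
  rw [← coe_zeta_mul_apply, ← mul_assoc, coe_zeta_mul_coe_moebius, one_mul]

end ArithmeticFunction

section GcdMatrix

variable {R : Type*} [CommRing R] {S : Finset ℕ}

def weightedDivisorMatrix (S : Finset ℕ) (w : ℕ → R) : Matrix S S R :=
  of fun a d => if d.1 ∣ a.1 then w a else 0

lemma weightedDivisorMatrix_isLowerTriangular (hS : ∀ a ∈ S, 0 < a) (w : ℕ → R) :
    (weightedDivisorMatrix S w).IsLowerTriangular := by
  intro a d hlt
  have hnot : ¬ d.1 ∣ a.1 := fun h => (Nat.le_of_dvd (hS a a.2) h).not_gt hlt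
  simp [weightedDivisorMatrix, hnot]

lemma det_weightedDivisorMatrix (hS : ∀ a ∈ S, 0 < a) (w : ℕ → R) :
    (weightedDivisorMatrix S w).det = ∏ a : S, w a := by
  rw [det_of_isLowerTriangular _ (weightedDivisorMatrix_isLowerTriangular hS w)]
  simp [weightedDivisorMatrix]

lemma filter_dvd_and_dvd_eq_divisors_gcd (hS : ∀ a ∈ S, 0 < a)
    (hSdc : ∀ a ∈ S, ∀ d, d ∣ a → d ∈ S) {a b : ℕ} (ha : a ∈ S) :
    {d ∈ S | d ∣ a ∧ d ∣ b} = (Nat.gcd a b).divisors := by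
  ext d
  simp only [mem_filter, Nat.mem_divisors, Nat.dvd_gcd_iff]
  exact ⟨fun h => ⟨h.2, (Nat.gcd_pos_of_pos_left b (hS a ha)).ne'⟩,
    fun h => ⟨hSdc a ha d h.1.1, h.1⟩⟩

lemma weightedDivisorMatrix_mul_diagonal_mul_transpose (hS : ∀ a ∈ S, 0 < a)
    (hSdc : ∀ a ∈ S, ∀ d, d ∣ a → d ∈ S) (w g : ℕ → R) :
    weightedDivisorMatrix S w * diagonal (fun d : S => g d) * (weightedDivisorMatrix S w)ᵀ =
      of fun a b : S => w a * w b * ∑ d ∈ (Nat.gcd a b).divisors, g d := by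
  ext a b
  rw [of_apply, ← filter_dvd_and_dvd_eq_divisors_gcd hS hSdc a.2, sum_filter, mul_sum,
    ← sum_attach S]
  simp only [mul_apply (M := _ * _), mul_diagonal, transpose_apply, weightedDivisorMatrix,
    of_apply]
  refine sum_congr rfl fun d _ => ?_
  by_cases hda : d.1 ∣ a.1 <;> by_cases hdb : d.1 ∣ b.1 <;>
    simp only [hda, hdb, ↓reduceIte, and_self, and_false, false_and, mul_zero, zero_mul]
  ring

lemma det_gcdSumMatrix (hS : ∀ a ∈ S, 0 < a) (hSdc : ∀ a ∈ S, ∀ d, d ∣ a → d ∈ S)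
    (w g : ℕ → R) :
    (of fun a b : S => w a * w b * ∑ d ∈ (Nat.gcd a b).divisors, g d).det =
      ∏ a : S, w a ^ 2 * g a := by
  rw [← weightedDivisorMatrix_mul_diagonal_mul_transpose hS hSdc, det_mul, det_mul,
    det_transpose, det_diagonal, det_weightedDivisorMatrix hS, ← prod_mul_distrib,
    ← prod_mul_distrib]
  exact prod_congr rfl fun a _ => by ring

lemma posDef_gcdSumMatrix (hS : ∀ a ∈ S, 0 < a) (hSdc : ∀ a ∈ S, ∀ d, d ∣ a → d ∈ S)
    {w g : ℕ → ℝ} (hw : ∀ a ∈ S, w a ≠ 0) (hg : ∀ d ∈ S, 0 < g d) :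
    (of fun a b : S => w a * w b * ∑ d ∈ (Nat.gcd a b).divisors, g d).PosDef := by
  rw [← weightedDivisorMatrix_mul_diagonal_mul_transpose hS hSdc,
    ← conjTranspose_eq_transpose_of_trivial]
  refine PosDef.mul_mul_conjTranspose_same (posDef_diagonal_iff.mpr fun d => hg d d.2) ?_
  refine vecMul_injective_of_isUnit ((isUnit_iff_isUnit_det _).mpr ?_)
  rw [det_weightedDivisorMatrix hS, isUnit_iff_ne_zero, prod_ne_zero_iff]
  exact fun a _ => hw a a.2

end GcdMatrix

lemma sqrt_mul_sq_eq_sq_rpow_mul {x : ℝ} (hx : 0 ≤ x) (y : ℝ) :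
    √x * y ^ 2 = (x ^ (1 / 4 : ℝ) * y) ^ 2 := by
  rw [mul_pow, ← Real.rpow_mul_natCast hx, Real.sqrt_eq_rpow]
  norm_num

lemma one_lt_one_div_sqrt_mul_sq {x y : ℝ} (hx : 0 ≤ x) (h0 : 0 < x ^ (1 / 4 : ℝ) * y)
    (h1 : x ^ (1 / 4 : ℝ) * y < 1) : 1 < 1 / (√x * y ^ 2) := by
  rw [sqrt_mul_sq_eq_sq_rpow_mul hx]
  exact one_lt_one_div (pow_pos h0 2) (pow_lt_one₀ h0.le h1 two_ne_zero)

lemma inv_sqrt_mul_sq_map_mul {φ : ℕ → ℝ} (hφ : ∀ m n, φ (m * n) = φ m * φ n) (m n : ℕ) :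
    (√(m * n : ℕ) * φ (m * n) ^ 2)⁻¹ = (√m * φ m ^ 2)⁻¹ * (√n * φ n ^ 2)⁻¹ := by
  rw [Nat.cast_mul, Real.sqrt_mul (Nat.cast_nonneg m), hφ, ← mul_inv]
  ring

lemma div_sqrt_gcd_eq {φ ψ : ℕ → ℝ} (hφ : ∀ m n, φ (m * n) = φ m * φ n)
    (hψ : ∀ n ≠ 0, ψ n = (√n * φ n ^ 2)⁻¹) {a b : ℕ} (hab : Nat.gcd a b ≠ 0)
    (hφab : φ (Nat.gcd a b) ≠ 0) :
    φ (Nat.lcm a b / Nat.gcd a b) / √(Nat.gcd a b) = φ a * φ b * ψ (Nat.gcd a b) := by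
  have hlcm : φ (Nat.lcm a b) = φ (Nat.lcm a b / Nat.gcd a b) * φ (Nat.gcd a b) := by
    rw [← hφ, Nat.div_mul_cancel ((Nat.gcd_dvd_left a b).trans (Nat.dvd_lcm_left a b))]
  have hsqrt : √(Nat.gcd a b) ≠ 0 := by positivity
  rw [← hφ, ← Nat.gcd_mul_lcm, hφ, hlcm, hψ _ hab]
  field_simp

theorem stmt_12 (φ : ℕ → ℝ) (hφ1 : φ 1 = 1)
    (hφ : ∀ m n : ℕ, φ (m * n) = φ m * φ n)
    (hp : ∀ p : ℕ, p.Prime → 0 < (p : ℝ) ^ ((1:ℝ)/4) * φ p ∧ (p : ℝ) ^ ((1:ℝ)/4) * φ p < 1)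
    (S : Finset ℕ) (hS : ∀ a ∈ S, 0 < a)
    (hSdc : ∀ a ∈ S, ∀ d : ℕ, d ∣ a → d ∈ S)
    (ψ : ℕ → ℝ) (hψ1 : ψ 1 = 1) (hψ : ∀ m n : ℕ, ψ (m * n) = ψ m * ψ n)
    (hψp : ∀ p : ℕ, p.Prime → ψ p = 1 / (Real.sqrt p * φ p ^ 2)) :
    Matrix.PosDef
      (fun a b : {x // x ∈ S} =>
        φ (Nat.lcm a.1 b.1 / Nat.gcd a.1 b.1) / Real.sqrt (Nat.gcd a.1 b.1)) ∧
    Matrix.det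
      (fun a b : {x // x ∈ S} =>
        φ (Nat.lcm a.1 b.1 / Nat.gcd a.1 b.1) / Real.sqrt (Nat.gcd a.1 b.1))
      = ∏ d ∈ S.attach, φ d.1 ^ 2 *
          ∑ e ∈ (d.1).divisors, ((ArithmeticFunction.moebius e : ℤ) : ℝ) * ψ (d.1 / e) := by
  have hφpos : ∀ n ≠ 0, 0 < φ n :=
    fun n => pos_of_map_mul hφ1 hφ fun p hpp => pos_of_mul_pos_right (hp p hpp).1 (by positivity)
  have hψp1 : ∀ p : ℕ, p.Prime → 1 < ψ p := fun p hpp => by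
    rw [hψp p hpp]
    exact one_lt_one_div_sqrt_mul_sq p.cast_nonneg (hp p hpp).1 (hp p hpp).2
  have hψeq : ∀ n ≠ 0, ψ n = (√n * φ n ^ 2)⁻¹ := fun n =>
    eq_of_map_mul_of_eq_on_primes (g := fun n : ℕ => (√n * φ n ^ 2)⁻¹) hψ1 hψ (by simp [hφ1])
      (inv_sqrt_mul_sq_map_mul hφ) fun p hpp => by rw [hψp p hpp, one_div]
  let Ψ : ArithmeticFunction ℝ := ⟨ψ, map_zero_of_map_mul hψ (hψp1 2 Nat.prime_two).ne'⟩
  have hM : (fun a b : S => φ (Nat.lcm a b / Nat.gcd a b) / √(Nat.gcd a b)) =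
      of fun a b : S => φ a * φ b * ∑ d ∈ (Nat.gcd a b).divisors, ((μ : _) * Ψ) d := by
    ext a b
    have hab : Nat.gcd a b ≠ 0 := (Nat.gcd_pos_of_pos_left _ (hS a a.2)).ne'
    rw [of_apply, sum_divisors_moebius_mul]
    exact div_sqrt_gcd_eq hφ hψeq hab (hφpos _ hab).ne'
  rw [hM, det_gcdSumMatrix hS hSdc, univ_eq_attach]
  refine ⟨posDef_gcdSumMatrix hS hSdc (fun a ha => (hφpos a (hS a ha).ne').ne')
    fun d hd => moebius_mul_pos Ψ hψ1 hψ hψp1 (hS d hd).ne', ?_⟩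
  simp only [moebius_mul_apply]
  rfl
end

section
/- Let φ be a multiplicative arithmetic function with 0 < p^{1/4}·φ(p) ≤ 1 for all primes p, and let S be a finite set of squarefree positive integers. Then the matrix (φ(lcm(a,b)/gcd(a,b))/√gcd(a,b))_{a,b∈S} is positive semidefinite. -/
/-!
For squarefree `a`, `b` with `g = gcd a b`, multiplicativity gives
`φ (lcm a b / g) / √g = φ a * φ b * q g` with `q n = (φ n ^ 2 * √n)⁻¹`. Since `q` is multiplicative,
`q g = ∑_{d ∣ g} c d` with `c d = ∏_{p ∣ d} (q p - 1)`, and the hypothesis `p ^ (1/4) * φ p ≤ 1`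
says exactly `1 ≤ q p`, so `c ≥ 0`. The matrix is therefore `∑_d c d • v_d v_dᵀ` with
`v_d a = [d ∣ a] φ a`, a nonnegative combination of rank-one positive semidefinite matrices.
-/

open Finset ArithmeticFunction

theorem apply_eq_prod_primeFactors_of_squarefree {M : Type*} [CommMonoid M] {f : ℕ → M}
    (h_one : f 1 = 1) (h_mul : ∀ m n, Nat.Coprime m n → f (m * n) = f m * f n) {n : ℕ}
    (hn : Squarefree n) : f n = ∏ p ∈ n.primeFactors, f p := by
  rw [Nat.multiplicative_factorization f h_mul h_one hn.ne_zero, Finsupp.prod,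
    Nat.support_factorization]
  refine prod_congr rfl fun p hp => ?_
  rw [Nat.factorization_eq_one_of_squarefree hn (Nat.prime_of_mem_primeFactors hp)
    (Nat.dvd_of_mem_primeFactors hp), pow_one]

theorem mul_apply_eq_apply_lcm_div_gcd_mul_sq {M : Type*} [CommMonoid M] {f : ℕ → M}
    (h_mul : ∀ m n, Nat.Coprime m n → f (m * n) = f m * f n) {a b : ℕ}
    (ha : Squarefree a) (hb : Squarefree b) :
    f a * f b = f (a.lcm b / a.gcd b) * f (a.gcd b) ^ 2 := by
  obtain ⟨a', b', hab', ha', hb'⟩ := Nat.exists_coprime a b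
  have hg : 0 < a.gcd b := Nat.gcd_pos_of_pos_left b ha.ne_zero.bot_lt
  generalize a.gcd b = g at ha' hb' hg ⊢
  subst ha' hb'
  rw [Nat.lcm_mul_right, hab'.lcm_eq_mul, Nat.mul_div_cancel _ hg, h_mul _ _ hab',
    h_mul _ _ (Nat.coprime_of_squarefree_mul ha), h_mul _ _ (Nat.coprime_of_squarefree_mul hb),
    sq]
  ac_rfl

theorem ArithmeticFunction.sum_divisors_prodPrimeFactors_sub_one {R : Type*} [CommRing R] {f : ℕ → R}
    (h_one : f 1 = 1) (h_mul : ∀ m n, Nat.Coprime m n → f (m * n) = f m * f n) {n : ℕ}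
    (hn : Squarefree n) : ∑ d ∈ n.divisors, prodPrimeFactors (fun p => f p - 1) d = f n := by
  rw [← (IsMultiplicative.prodPrimeFactors _).prodPrimeFactors_one_add_of_squarefree hn,
    apply_eq_prod_primeFactors_of_squarefree h_one h_mul hn]
  refine prod_congr rfl fun p hp => ?_
  have hp := Nat.prime_of_mem_primeFactors hp
  rw [prodPrimeFactors_apply hp.ne_zero, hp.primeFactors, prod_singleton, add_sub_cancel]

theorem ArithmeticFunction.prodPrimeFactors_nonneg {R : Type*} [CommSemiring R] [PartialOrder R]
    [IsOrderedRing R] {w : ℕ → R} (hw : ∀ p, p.Prime → 0 ≤ w p) (d : ℕ) :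
    0 ≤ prodPrimeFactors w d := by
  rcases eq_or_ne d 0 with rfl | hd
  · simp
  · rw [prodPrimeFactors_apply hd]
    exact prod_nonneg fun p hp => hw p (Nat.prime_of_mem_primeFactors hp)

theorem Matrix.posSemidef_mul_mul_sum_divisors_gcd {S : Finset ℕ} (hS : 0 ∉ S) (f c : ℕ → ℝ)
    (hc : ∀ d, 0 ≤ c d) :
    PosSemidef fun a b : S => f a * f b * ∑ d ∈ (Nat.gcd a b).divisors, c d := by
  let v : ℕ → S → ℝ := fun d a => if d ∣ a then f a else 0
  suffices h : (fun a b : S => f a * f b * ∑ d ∈ (Nat.gcd a b).divisors, c d)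
      = ∑ d ∈ S.biUnion Nat.divisors, c d • vecMulVec (v d) (star (v d)) by
    rw [h]
    exact posSemidef_sum _ fun d _ => (posSemidef_vecMulVec_self_star _).smul (hc d)
  ext ⟨a, ha⟩ ⟨b, hb⟩
  have ha0 : a ≠ 0 := ne_of_mem_of_not_mem ha hS
  have hD : {d ∈ S.biUnion Nat.divisors | d ∣ a ∧ d ∣ b} = (Nat.gcd a b).divisors := by
    ext d
    simp only [mem_filter, mem_biUnion, Nat.mem_divisors, Nat.dvd_gcd_iff, ne_eq,
      Nat.gcd_eq_zero_iff, ha0, false_and, not_false_eq_true, and_true]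
    exact ⟨And.right, fun hd => ⟨⟨a, ha, hd.1, ha0⟩, hd⟩⟩
  simp only [Matrix.sum_apply, Matrix.smul_apply, vecMulVec_apply, v, star_trivial, smul_eq_mul]
  rw [← hD, sum_filter, mul_sum]
  refine sum_congr rfl fun d _ => ?_
  split_ifs <;> simp_all
  ring

theorem one_le_inv_sq_mul_sqrt {t x : ℝ} (ht : 0 ≤ t) (h_pos : 0 < t ^ (1 / 4 : ℝ) * x)
    (h_le : t ^ (1 / 4 : ℝ) * x ≤ 1) : 1 ≤ (x ^ 2 * √t)⁻¹ := by
  have h : x ^ 2 * √t = (t ^ (1 / 4 : ℝ) * x) ^ 2 := by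
    rw [mul_pow, ← Real.rpow_natCast (t ^ _), ← Real.rpow_mul ht, Real.sqrt_eq_rpow]
    norm_num
    ring
  rw [h, one_le_inv₀ (by positivity)]
  exact pow_le_one₀ h_pos.le h_le

theorem stmt_13_general (φ : ℕ → ℝ) (hφ1 : φ 1 = 1)
    (hφ : ∀ m n : ℕ, Nat.Coprime m n → φ (m * n) = φ m * φ n)
    (hp : ∀ p : ℕ, p.Prime → 0 < (p : ℝ) ^ ((1:ℝ)/4) * φ p ∧ (p : ℝ) ^ ((1:ℝ)/4) * φ p ≤ 1)
    (S : Finset ℕ) (hSsf : ∀ a ∈ S, Squarefree a) :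
    Matrix.PosSemidef
      (fun a b : {x // x ∈ S} =>
        φ (Nat.lcm a.1 b.1 / Nat.gcd a.1 b.1) / Real.sqrt (Nat.gcd a.1 b.1)) := by
  set q : ℕ → ℝ := fun n => (φ n ^ 2 * √n)⁻¹
  have hq_mul : ∀ m n, Nat.Coprime m n → q (m * n) = q m * q n := fun m n hmn => by
    simp only [q, hφ m n hmn, Nat.cast_mul, Real.sqrt_mul (Nat.cast_nonneg _)]
    ring
  have hq_one : q 1 = 1 := by simp [q, hφ1]
  have hφ_pos : ∀ p : ℕ, p.Prime → 0 < φ p := fun p hp' =>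
    pos_of_mul_pos_right (hp p hp').1 (by positivity)
  have h_entry : (fun a b : S => φ (Nat.lcm a.1 b.1 / Nat.gcd a.1 b.1) / √(Nat.gcd a.1 b.1))
      = fun a b : S => φ a * φ b * ∑ d ∈ (Nat.gcd a b).divisors, prodPrimeFactors (q · - 1) d := by
    ext ⟨a, ha⟩ ⟨b, hb⟩
    have hg : Squarefree (a.gcd b) := (hSsf a ha).squarefree_of_dvd (Nat.gcd_dvd_left a b)
    have hφg : φ (a.gcd b) ≠ 0 := by
      rw [apply_eq_prod_primeFactors_of_squarefree hφ1 hφ hg]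
      exact (prod_pos fun p hp' => hφ_pos p (Nat.prime_of_mem_primeFactors hp')).ne'
    have hsqrt : √(a.gcd b : ℕ) ≠ 0 := by simpa using hg.ne_zero
    rw [sum_divisors_prodPrimeFactors_sub_one hq_one hq_mul hg,
      mul_apply_eq_apply_lcm_div_gcd_mul_sq hφ (hSsf a ha) (hSsf b hb)]
    simp only [q]
    field_simp
  rw [h_entry]
  exact Matrix.posSemidef_mul_mul_sum_divisors_gcd (fun h => (hSsf 0 h).ne_zero rfl) φ _
    (prodPrimeFactors_nonneg fun p hp' => sub_nonneg.2 <|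
      one_le_inv_sq_mul_sqrt (Nat.cast_nonneg p) (hp p hp').1 (hp p hp').2)

theorem stmt_13 (φ : ℕ → ℝ) (hφ1 : φ 1 = 1)
    (hφ : ∀ m n : ℕ, Nat.Coprime m n → φ (m * n) = φ m * φ n)
    (hp : ∀ p : ℕ, p.Prime → 0 < (p : ℝ) ^ ((1:ℝ)/4) * φ p ∧ (p : ℝ) ^ ((1:ℝ)/4) * φ p ≤ 1)
    (S : Finset ℕ) (hS : ∀ a ∈ S, 0 < a) (hSsf : ∀ a ∈ S, Squarefree a) :
    Matrix.PosSemidef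
      (fun a b : {x // x ∈ S} =>
        φ (Nat.lcm a.1 b.1 / Nat.gcd a.1 b.1) / Real.sqrt (Nat.gcd a.1 b.1)) :=
  stmt_13_general φ hφ1 hφ hp S hSsf
end

section
/- Let p be prime, K ≥ 2, and let M_K be the K×K matrix with entries M_K(i,j) = φ*(p^{|i−j|}) where φ*(p^m) = (mβ+1)p^{-3m/4} and β = (1−p^{-3/2})/(1+p^{-3/2}). Let U_K be the K×K matrix which is 1 on the diagonal, −p^{-3/4} at positions (i+1,i) for 1 ≤ i ≤ K−1 and at position (K−1,K), and 0 elsewhere. Then A_K := U_Kᵀ M_K U_K satisfies A_K(i,j) = β(1−p^{-3/2})·p^{-3|i−j|/4} for 1 ≤ i,j ≤ K−1 as well as for i = j = K, and A_K(i,K) = A_K(K,j) = 0 for 1 ≤ i,j ≤ K−1. -/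
/-!
With `q = p^(-3/4)`, the matrix `U` is `1 - q P`, where `P` moves column `i` to row `i + 1`
(row `K - 2` for the last column), so `A(i,j)` is a combination of four entries of `M`.
As `M(i,j) = φ(|i - j|)` with `φ(m) = (mβ + 1) q^m`, an entry of `A` off the last row and
column is `(1 + q²) φ(d) - q φ(d - 1) - q φ(d + 1)`, which kills the linear factor `mβ + 1` up
to the constant `β (1 - q²)`; at `d = 0` this needs `β (1 + q²) = 1 - q²`. In the last column
one gets `φ(d) - 2q φ(d - 1) + q² φ(d - 2)`, a second difference of `mβ + 1`, hence `0`;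
the last row follows by symmetry.
-/

open Matrix

theorem isSymm_transpose_mul_mul {R n : Type*} [CommSemiring R] [Fintype n] {M : Matrix n n R}
    (hM : M.IsSymm) (U : Matrix n n R) : (Uᵀ * M * U).IsSymm := by
  simp only [IsSymm, transpose_mul, transpose_transpose, hM.eq, Matrix.mul_assoc]

theorem transpose_mul_mul_apply_of_eq_one_sub_smul {R n : Type*} [CommRing R] [Fintype n]
    [DecidableEq n] {M U : Matrix n n R} {c : n → n} {q : R}
    (hU : U = 1 - q • (1 : Matrix n n R).submatrix id c) (i j : n) :
    (Uᵀ * M * U) i j = M i j - q * M i (c j) - q * M (c i) j + q ^ 2 * M (c i) (c j) := by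
  have hr (N : Matrix n n R) : N * (1 : Matrix n n R).submatrix id c = N.submatrix id c := by
    simpa using mul_submatrix_one (Equiv.refl n) c N
  have hl (N : Matrix n n R) : (1 : Matrix n n R).submatrix c id * N = N.submatrix c id := by
    simpa using one_submatrix_mul c (Equiv.refl n) N
  simp only [hU, transpose_sub, transpose_one, transpose_smul, transpose_submatrix,
    Matrix.sub_mul, Matrix.mul_sub, Matrix.one_mul, Matrix.mul_one, Algebra.smul_mul_assoc,
    Algebra.mul_smul_comm, hl, hr, Matrix.sub_apply, Matrix.smul_apply, submatrix_apply, id_eq,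
    smul_eq_mul]
  ring

def nextOrPrev {K : ℕ} (i : Fin K) : Fin K :=
  if h : (i : ℕ) + 1 < K then ⟨i + 1, h⟩ else ⟨K - 2, by have := i.isLt; omega⟩

theorem nextOrPrev_val_of_lt {K : ℕ} {i : Fin K} (hi : (i : ℕ) < K - 1) :
    (nextOrPrev i : ℕ) = i + 1 := by
  rw [nextOrPrev, dif_pos (by omega)]

theorem nextOrPrev_val_of_eq {K : ℕ} {i : Fin K} (hi : (i : ℕ) = K - 1) :
    (nextOrPrev i : ℕ) = K - 2 := by
  rw [nextOrPrev, dif_neg (by omega)]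

theorem of_ite_eq_one_sub_smul_submatrix_nextOrPrev {R : Type*} [Ring R] {K : ℕ} (hK : 2 ≤ K)
    (q : R) :
    Matrix.of (fun i j : Fin K => if i = j then 1
        else if (i : ℕ) = (j : ℕ) + 1 ∨ ((i : ℕ) = K - 2 ∧ (j : ℕ) = K - 1) then -q else 0) =
      1 - q • (1 : Matrix (Fin K) (Fin K) R).submatrix id nextOrPrev := by
  ext i j
  have := j.isLt
  simp only [of_apply, Matrix.sub_apply, Matrix.smul_apply, submatrix_apply, id, one_apply,
    smul_eq_mul, nextOrPrev, Fin.ext_iff]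
  split_ifs <;> (try dsimp only at *) <;> first | omega | simp

section Toeplitz

variable {R : Type*} [CommRing R] {K : ℕ} {g : ℤ → R} {q : R} {M U : Matrix (Fin K) (Fin K) R}

theorem transpose_mul_mul_apply_of_lt_of_lt (hM : ∀ i j, M i j = g ((i : ℤ) - j))
    (hU : U = 1 - q • (1 : Matrix (Fin K) (Fin K) R).submatrix id nextOrPrev) {i j : Fin K}
    (hi : (i : ℕ) < K - 1) (hj : (j : ℕ) < K - 1) :
    (Uᵀ * M * U) i j = (1 + q ^ 2) * g (i - j) - q * g (i - j - 1) - q * g (i - j + 1) := by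
  have hci := nextOrPrev_val_of_lt hi
  have hcj := nextOrPrev_val_of_lt hj
  rw [transpose_mul_mul_apply_of_eq_one_sub_smul hU, hM, hM, hM, hM, hci, hcj]
  push_cast
  ring_nf

theorem transpose_mul_mul_apply_of_eq_of_eq (hM : ∀ i j, M i j = g ((i : ℤ) - j))
    (hU : U = 1 - q • (1 : Matrix (Fin K) (Fin K) R).submatrix id nextOrPrev) (hK : 2 ≤ K)
    {i j : Fin K} (hi : (i : ℕ) = K - 1) (hj : (j : ℕ) = K - 1) :
    (Uᵀ * M * U) i j = (1 + q ^ 2) * g (i - j) - q * g (i - j - 1) - q * g (i - j + 1) := by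
  have hci := nextOrPrev_val_of_eq hi
  have hcj := nextOrPrev_val_of_eq hj
  rw [transpose_mul_mul_apply_of_eq_one_sub_smul hU, hM, hM, hM, hM, hci, hcj, hi, hj]
  push_cast [Nat.cast_sub hK, Nat.cast_sub (by omega : 1 ≤ K)]
  ring_nf

theorem transpose_mul_mul_apply_of_lt_of_eq (hM : ∀ i j, M i j = g ((i : ℤ) - j))
    (hU : U = 1 - q • (1 : Matrix (Fin K) (Fin K) R).submatrix id nextOrPrev) (hK : 2 ≤ K)
    {i j : Fin K} (hi : (i : ℕ) < K - 1) (hj : (j : ℕ) = K - 1) :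
    (Uᵀ * M * U) i j = g (i - j) - 2 * q * g (i - j + 1) + q ^ 2 * g (i - j + 2) := by
  have hci := nextOrPrev_val_of_lt hi
  have hcj := nextOrPrev_val_of_eq hj
  rw [transpose_mul_mul_apply_of_eq_one_sub_smul hU, hM, hM, hM, hM, hci, hcj, hj]
  push_cast [Nat.cast_sub hK, Nat.cast_sub (by omega : 1 ≤ K)]
  ring_nf

end Toeplitz

section PhiStar

variable {R : Type*} [CommRing R]

def phiStar (β q : R) (m : ℕ) : R := (m * β + 1) * q ^ m

variable {β q : R}

theorem phiStar_natAbs_second_difference (hβ : β * (1 + q ^ 2) = 1 - q ^ 2) (z : ℤ) :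
    (1 + q ^ 2) * phiStar β q z.natAbs - q * phiStar β q (z - 1).natAbs
      - q * phiStar β q (z + 1).natAbs = β * (1 - q ^ 2) * q ^ z.natAbs := by
  rcases lt_trichotomy z 0 with hz | rfl | hz
  · obtain ⟨m, rfl⟩ : ∃ m : ℕ, z = -(m + 1) := ⟨(-z - 1).toNat, by omega⟩
    rw [show (-(m + 1 : ℤ)).natAbs = m + 1 by omega,
      show (-(m + 1 : ℤ) - 1).natAbs = m + 2 by omega,
      show (-(m + 1 : ℤ) + 1).natAbs = m by omega]
    simp only [phiStar]
    push_cast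
    ring
  · simp only [phiStar]
    norm_num
    linear_combination -hβ
  · obtain ⟨m, rfl⟩ : ∃ m : ℕ, z = m + 1 := ⟨(z - 1).toNat, by omega⟩
    rw [show ((m : ℤ) + 1).natAbs = m + 1 by omega, show ((m : ℤ) + 1 - 1).natAbs = m by omega,
      show ((m : ℤ) + 1 + 1).natAbs = m + 2 by omega]
    simp only [phiStar]
    push_cast
    ring

theorem phiStar_natAbs_boundary (hβ : β * (1 + q ^ 2) = 1 - q ^ 2) {z : ℤ} (hz : z < 0) :
    phiStar β q z.natAbs - 2 * q * phiStar β q (z + 1).natAbs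
      + q ^ 2 * phiStar β q (z + 2).natAbs = 0 := by
  rcases (show z = -1 ∨ z < -1 by omega) with rfl | hlt
  · simp only [phiStar]
    norm_num
    linear_combination q * hβ
  · obtain ⟨m, rfl⟩ : ∃ m : ℕ, z = -(m + 2) := ⟨(-z - 2).toNat, by omega⟩
    rw [show (-(m + 2 : ℤ)).natAbs = m + 2 by omega,
      show (-(m + 2 : ℤ) + 1).natAbs = m + 1 by omega,
      show (-(m + 2 : ℤ) + 2).natAbs = m by omega]
    simp only [phiStar]
    push_cast
    ring

end PhiStar

theorem stmt_17 (p : ℕ) (K : ℕ) (hK : 2 ≤ K)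
    (β : ℝ) (hβ : β = (1 - (p : ℝ) ^ (-(3:ℝ)/2)) / (1 + (p : ℝ) ^ (-(3:ℝ)/2)))
    (φs : ℕ → ℝ) (hφs : ∀ m : ℕ, φs m = ((m : ℝ) * β + 1) * (p : ℝ) ^ (-(3 * (m : ℝ) / 4)))
    (M U A : Matrix (Fin K) (Fin K) ℝ)
    (hM : ∀ i j : Fin K, M i j = φs (((i : ℤ) - (j : ℤ)).natAbs))
    (hU : ∀ i j : Fin K,
      U i j = if i = j then 1
        else if (i : ℕ) = (j : ℕ) + 1 ∨ ((i : ℕ) = K - 2 ∧ (j : ℕ) = K - 1)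
          then -(p : ℝ) ^ (-(3:ℝ)/4) else 0)
    (hA : A = U.transpose * M * U) :
    (∀ i j : Fin K, ((i : ℕ) < K - 1 ∧ (j : ℕ) < K - 1) ∨ (i : ℕ) = K - 1 ∧ (j : ℕ) = K - 1 →
        A i j = β * (1 - (p : ℝ) ^ (-(3:ℝ)/2)) *
          (p : ℝ) ^ (-(3 * ((((i : ℤ) - (j : ℤ)).natAbs : ℝ)) / 4))) ∧
    (∀ i j : Fin K, (i : ℕ) < K - 1 → (j : ℕ) < K - 1 →
        A i ⟨K - 1, by omega⟩ = 0 ∧ A ⟨K - 1, by omega⟩ j = 0) := by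
  set q : ℝ := (p : ℝ) ^ (-(3:ℝ)/4)
  have hpow (m : ℕ) : (p : ℝ) ^ (-(3 * (m : ℝ) / 4)) = q ^ m := by
    rw [← Real.rpow_natCast, ← Real.rpow_mul (Nat.cast_nonneg p)]
    ring_nf
  have hq2 : (p : ℝ) ^ (-(3:ℝ)/2) = q ^ 2 := by
    rw [← Real.rpow_natCast, ← Real.rpow_mul (Nat.cast_nonneg p)]
    norm_num
  have hβq : β * (1 + q ^ 2) = 1 - q ^ 2 := by
    rw [hβ, hq2]
    exact div_mul_cancel₀ _ (by positivity)
  set g : ℤ → ℝ := fun z => phiStar β q z.natAbs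
  have hMg (i j : Fin K) : M i j = g ((i : ℤ) - j) := by
    rw [hM, hφs, hpow]
    rfl
  have hMsymm : M.IsSymm := IsSymm.ext fun i j => by rw [hM, hM, ← Int.natAbs_neg, neg_sub]
  have hU' : U = 1 - q • (1 : Matrix (Fin K) (Fin K) ℝ).submatrix id nextOrPrev := by
    rw [← of_ite_eq_one_sub_smul_submatrix_nextOrPrev hK]
    ext i j
    exact hU i j
  have hlast (i : Fin K) (hi : (i : ℕ) < K - 1) : A i ⟨K - 1, by omega⟩ = 0 := by
    rw [hA, transpose_mul_mul_apply_of_lt_of_eq hMg hU' hK hi rfl]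
    exact phiStar_natAbs_boundary hβq (by dsimp only; omega)
  refine ⟨fun i j hij => ?_, fun i j hi hj => ⟨hlast i hi, ?_⟩⟩
  · rw [hpow, hq2, ← phiStar_natAbs_second_difference hβq, hA]
    rcases hij with ⟨hi, hj⟩ | ⟨hi, hj⟩
    · exact transpose_mul_mul_apply_of_lt_of_lt hMg hU' hi hj
    · exact transpose_mul_mul_apply_of_eq_of_eq hMg hU' hK hi hj
  · rw [← hlast j hj, hA]
    exact (isSymm_transpose_mul_mul hMsymm U).apply _ _
end

section
/- Let p be prime, β = (1−p^{-3/2})/(1+p^{-3/2}), and φ*(p^m) = (mβ+1)p^{-3m/4}. Then for every K ≥ 1, the K×K matrix with entries φ*(p^{|i−j|}) is positive definite. -/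
/-!
Put `q = p^(-3/4)`, so that the matrix is `A i j = (β |i - j| + 1) q^|i-j|` with
`β = (1 - q²)/(1 + q²)`. Let `G i j = q^|i-j|` be the Kac–Murdock–Szegő matrix and
`u i = q^i`, `v i = q^(K-1-i)`. Then `(1 + q²) A = (1 - q²) GᵀG + q² (u uᵀ + v vᵀ)`: this is the
identity `∑_{k ∈ ℤ} q^(|i-k| + |j-k|) = (|i - j| + (1 + q²)/(1 - q²)) q^|i-j|` with the geometric
tails `k < 0` and `k ≥ K` summed into the two rank-one terms. For `q² ≠ 1` the matrix `G` is
nonsingular, because the second difference `q g(n-1) + q g(n+1) - (1 + q²) g(n)` of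
`g(n) = q^|n|` is `(q² - 1) δ_{n,0}`. Hence `GᵀG` is positive definite, and so is `A`.
-/

open Finset Matrix

section CommRing

variable {R : Type*} [CommRing R] (q : R)

theorem one_sub_sq_mul_sum_range_pow_add (d n : ℕ) :
    (1 - q ^ 2) * ∑ t ∈ range n, q ^ (d + 2 * (t + 1)) + q ^ 2 * q ^ (d + 2 * n)
      = q ^ 2 * q ^ d := by
  induction n with
  | zero => simp
  | succ n ih =>
    rw [sum_range_succ]
    linear_combination ih

theorem sum_range_pow_natAbs_mul_pow_natAbs_of_le {a b K : ℕ} (hab : a ≤ b) (hbK : b < K) :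
    (1 - q ^ 2) * ∑ k ∈ range K, q ^ ((k : ℤ) - a).natAbs * q ^ ((k : ℤ) - b).natAbs
      + q ^ 2 * (q ^ a * q ^ b + q ^ (K - 1 - a) * q ^ (K - 1 - b))
      = ((1 - q ^ 2) * (b - a : ℕ) + 1 + q ^ 2) * q ^ (b - a) := by
  set f : ℕ → R := fun k => q ^ ((k : ℤ) - a).natAbs * q ^ ((k : ℤ) - b).natAbs
  have left : ∑ k ∈ range a, f k = ∑ t ∈ range a, q ^ (b - a + 2 * (t + 1)) := by
    rw [← sum_range_reflect]
    refine sum_congr rfl fun t ht => ?_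
    rw [mem_range] at ht
    simp only [f, ← pow_add]
    congr 1
    omega
  have middle : ∑ k ∈ Ico a (b + 1), f k = ((b - a : ℕ) + 1) * q ^ (b - a) := by
    rw [sum_congr rfl fun k hk => (?_ : f k = q ^ (b - a)), sum_const, Nat.card_Ico, nsmul_eq_mul]
    · push_cast [show b + 1 - a = b - a + 1 by omega]; ring
    · rw [mem_Ico] at hk
      simp only [f, ← pow_add]
      congr 1
      omega
  have right : ∑ k ∈ Ico (b + 1) K, f k = ∑ t ∈ range (K - 1 - b), q ^ (b - a + 2 * (t + 1)) := by
    rw [sum_Ico_eq_sum_range, show K - (b + 1) = K - 1 - b by omega]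
    refine sum_congr rfl fun t ht => ?_
    simp only [f, ← pow_add]
    congr 1
    omega
  have hsplit : ∑ k ∈ range K, f k
      = ∑ k ∈ range a, f k + ∑ k ∈ Ico a (b + 1), f k + ∑ k ∈ Ico (b + 1) K, f k := by
    rw [← sum_range_add_sum_Ico _ (show b + 1 ≤ K by omega),
      ← sum_range_add_sum_Ico _ (show a ≤ b + 1 by omega)]
  have hu : q ^ a * q ^ b = q ^ (b - a + 2 * a) := by rw [← pow_add]; congr 1; omega
  have hv : q ^ (K - 1 - a) * q ^ (K - 1 - b) = q ^ (b - a + 2 * (K - 1 - b)) := by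
    rw [← pow_add]; congr 1; omega
  rw [hsplit, left, middle, right, hu, hv]
  linear_combination one_sub_sq_mul_sum_range_pow_add q (b - a) a
    + one_sub_sq_mul_sum_range_pow_add q (b - a) (K - 1 - b)

def kacMurdockSzego (K : ℕ) : Matrix (Fin K) (Fin K) R :=
  of fun i j => q ^ ((i : ℤ) - j).natAbs

theorem one_sub_sq_smul_kacMurdockSzego_transpose_mul_self_add (K : ℕ) :
    (1 - q ^ 2) • ((kacMurdockSzego q K)ᵀ * kacMurdockSzego q K)
      + q ^ 2 • (vecMulVec (fun i : Fin K => q ^ (i : ℕ)) (fun i : Fin K => q ^ (i : ℕ))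
        + vecMulVec (fun i : Fin K => q ^ (i.rev : ℕ)) (fun i : Fin K => q ^ (i.rev : ℕ)))
      = of fun i j : Fin K =>
        ((1 - q ^ 2) * ((i : ℤ) - j).natAbs + 1 + q ^ 2) * q ^ ((i : ℤ) - j).natAbs := by
  ext i j
  wlog hij : i ≤ j generalizing i j
  · have := this j i (le_of_not_ge hij)
    simp only [Matrix.add_apply, Matrix.smul_apply, mul_apply, transpose_apply, vecMulVec_apply,
      of_apply] at this ⊢
    rw [show ((i : ℤ) - j).natAbs = ((j : ℤ) - i).natAbs by omega, ← this]
    simp only [mul_comm]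
  simp only [Matrix.add_apply, Matrix.smul_apply, mul_apply, transpose_apply, vecMulVec_apply,
    of_apply, kacMurdockSzego, Fin.val_rev, smul_eq_mul]
  rw [Fin.sum_univ_eq_sum_range (fun k => q ^ ((k : ℤ) - i).natAbs * q ^ ((k : ℤ) - j).natAbs),
    show ((i : ℤ) - j).natAbs = j - i by omega, show K - (i + 1) = K - 1 - i by omega,
    show K - (j + 1) = K - 1 - j by omega]
  exact sum_range_pow_natAbs_mul_pow_natAbs_of_le q hij j.isLt

theorem pow_natAbs_second_difference (n : ℤ) :
    q * q ^ (n - 1).natAbs + q * q ^ (n + 1).natAbs - (1 + q ^ 2) * q ^ n.natAbs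
      = if n = 0 then q ^ 2 - 1 else 0 := by
  rcases lt_trichotomy n 0 with hn | rfl | hn
  · rw [if_neg hn.ne, show (n - 1).natAbs = (n + 1).natAbs + 2 by omega,
      show n.natAbs = (n + 1).natAbs + 1 by omega]
    ring
  · simp
    ring
  · rw [if_neg hn.ne', show (n + 1).natAbs = (n - 1).natAbs + 2 by omega,
      show n.natAbs = (n - 1).natAbs + 1 by omega]
    ring

theorem sum_pow_natAbs_second_difference {K : ℕ} (x : Fin K → R) (m : Fin K) :
    q * ∑ i : Fin K, q ^ ((m : ℤ) - 1 - i).natAbs * x i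
      + q * ∑ i : Fin K, q ^ ((m : ℤ) + 1 - i).natAbs * x i
      - (1 + q ^ 2) * ∑ i : Fin K, q ^ ((m : ℤ) - i).natAbs * x i = (q ^ 2 - 1) * x m := by
  simp only [mul_sum, ← sum_add_distrib, ← sum_sub_distrib]
  rw [sum_congr rfl fun i _ => (?_ : _ = if m = i then (q ^ 2 - 1) * x i else 0), sum_ite_eq,
    if_pos (mem_univ m)]
  rw [show (m : ℤ) - 1 - i = (m - i : ℤ) - 1 by ring,
    show (m : ℤ) + 1 - i = (m - i : ℤ) + 1 by ring]
  have key := congrArg (· * x i) (pow_natAbs_second_difference q ((m : ℤ) - i))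
  simp only [sub_eq_zero, Int.natCast_inj, Fin.val_inj, ite_mul, zero_mul] at key
  rw [← key]
  ring

end CommRing

theorem kacMurdockSzego_mulVec_injective {F : Type*} [Field F] {q : F} (hq : q ^ 2 ≠ 1) (K : ℕ) :
    Function.Injective (kacMurdockSzego q K).mulVec := by
  refine (injective_iff_map_eq_zero (kacMurdockSzego q K).mulVecLin).mpr fun x hx => ?_
  -- `y` extends `kacMurdockSzego q K *ᵥ x` to `ℤ`; past either end it decays by the factor `q`.
  set y : ℤ → F := fun k => ∑ i : Fin K, q ^ (k - i).natAbs * x i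
  have interior : ∀ k : Fin K, y k = 0 := fun k => congrFun hx k
  have below : ∀ k : Fin K, y (k - 1) = 0 := by
    intro k
    by_cases hk : (k : ℕ) = 0
    · rw [← mul_eq_zero_of_right q (interior k)]
      refine (sum_congr rfl fun i _ => ?_).trans (mul_sum ..).symm
      rw [show ((k : ℤ) - 1 - i).natAbs = ((k : ℤ) - i).natAbs + 1 by omega]
      ring
    · simpa [show ((k - 1 : ℕ) : ℤ) = k - 1 by omega] using interior ⟨k - 1, by omega⟩
  have above : ∀ k : Fin K, y (k + 1) = 0 := by
    intro k
    by_cases hk : (k : ℕ) + 1 = K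
    · rw [← mul_eq_zero_of_right q (interior k)]
      refine (sum_congr rfl fun i _ => ?_).trans (mul_sum ..).symm
      rw [show ((k : ℤ) + 1 - i).natAbs = ((k : ℤ) - i).natAbs + 1 by omega]
      ring
    · simpa using interior ⟨k + 1, by omega⟩
  funext m
  have h : q * y (m - 1) + q * y (m + 1) - (1 + q ^ 2) * y m = (q ^ 2 - 1) * x m :=
    sum_pow_natAbs_second_difference q x m
  rw [below, above, interior] at h
  simpa [sub_eq_zero, hq] using h.symm

theorem posDef_natAbs_mul_add_one_mul_pow_natAbs {q : ℝ} (hq : q ^ 2 < 1) (K : ℕ) :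
    PosDef (of fun i j : Fin K =>
      (((i : ℤ) - j).natAbs * ((1 - q ^ 2) / (1 + q ^ 2)) + 1) * q ^ ((i : ℤ) - j).natAbs) := by
  have hq' : 0 < 1 + q ^ 2 := by positivity
  have rescale : (of fun i j : Fin K =>
      (((i : ℤ) - j).natAbs * ((1 - q ^ 2) / (1 + q ^ 2)) + 1) * q ^ ((i : ℤ) - j).natAbs)
      = (1 + q ^ 2)⁻¹ • (of fun i j : Fin K =>
        ((1 - q ^ 2) * ((i : ℤ) - j).natAbs + 1 + q ^ 2) * q ^ ((i : ℤ) - j).natAbs) := by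
    ext i j
    simp only [of_apply, Matrix.smul_apply, smul_eq_mul]
    field_simp
    ring
  rw [rescale, ← one_sub_sq_smul_kacMurdockSzego_transpose_mul_self_add]
  refine PosDef.smul (PosDef.add_posSemidef ?_ ?_) (inv_pos.2 hq')
  · rw [← conjTranspose_eq_transpose_of_trivial]
    exact (PosDef.conjTranspose_mul_self _ (kacMurdockSzego_mulVec_injective hq.ne K)).smul
      (sub_pos.2 hq)
  · have rank_one (u : Fin K → ℝ) : (vecMulVec u u).PosSemidef := by
      simpa [Pi.star_def] using posSemidef_vecMulVec_self_star u
    exact ((rank_one _).add (rank_one _)).smul (sq_nonneg q)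

theorem stmt_19_general (p : ℕ) (hp : p.Prime) (K : ℕ)
    (β : ℝ) (hβ : β = (1 - (p : ℝ) ^ (-(3:ℝ)/2)) / (1 + (p : ℝ) ^ (-(3:ℝ)/2)))
    (φs : ℕ → ℝ) (hφs : ∀ m : ℕ, φs m = ((m : ℝ) * β + 1) * (p : ℝ) ^ (-(3 * (m : ℝ) / 4))) :
    Matrix.PosDef (fun i j : Fin K => φs (((i : ℤ) - (j : ℤ)).natAbs)) := by
  have hp1 : (1 : ℝ) < p := mod_cast hp.one_lt
  set q : ℝ := (p : ℝ) ^ (-(3 : ℝ) / 4)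
  have hq_pow (m : ℕ) : (p : ℝ) ^ (-(3 * (m : ℝ) / 4)) = q ^ m := by
    rw [← Real.rpow_natCast, ← Real.rpow_mul (by positivity)]
    ring_nf
  have hq : q ^ 2 < 1 :=
    pow_lt_one₀ (by positivity) (Real.rpow_lt_one_of_one_lt_of_neg hp1 (by norm_num)) two_ne_zero
  have hβq : β = (1 - q ^ 2) / (1 + q ^ 2) := by
    rw [hβ, ← hq_pow 2]
    norm_num
  simp_rw [hφs, hq_pow, hβq]
  exact posDef_natAbs_mul_add_one_mul_pow_natAbs hq K

theorem stmt_19 (p : ℕ) (hp : p.Prime) (K : ℕ) (hK : 1 ≤ K)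
    (β : ℝ) (hβ : β = (1 - (p : ℝ) ^ (-(3:ℝ)/2)) / (1 + (p : ℝ) ^ (-(3:ℝ)/2)))
    (φs : ℕ → ℝ) (hφs : ∀ m : ℕ, φs m = ((m : ℝ) * β + 1) * (p : ℝ) ^ (-(3 * (m : ℝ) / 4))) :
    Matrix.PosDef (fun i j : Fin K => φs (((i : ℤ) - (j : ℤ)).natAbs)) :=
  stmt_19_general p hp K β hβ φs hφs
end
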